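/- In the lattice P (m=3, n=9), let μ = s_{126} s_{346} s_{568} s_{15} s_{28} s_{79} s_{67} (composition of reflections). Then μ^2 equals the translation T_{α} with α = e_6 - e_7, i.e., μ(μ(L)) = L + ⟨δ,L⟩(e_6-e_7) - (⟨δ,L⟩ + ⟨L, e_6-e_7⟩) δ for all L ∈ P. -/

import Mathlib

def ee (i : ℕ) : ℕ → ℤ := fun j => if j = i then 1 else 0

def B (x y : ℕ → ℤ) : ℤ := -(x 0 * y 0) + ∑ i ∈ Finset.Icc 1 9, x i * y i

def reflE (β L : ℕ → ℤ) : ℕ → ℤ := L - B β L • β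

def r2 (i j : ℕ) : ℕ → ℤ := ee i - ee j

def r3 (i j k : ℕ) : ℕ → ℤ := ee 0 - ee i - ee j - ee k

def δδ : ℕ → ℤ := 3 • ee 0 - ∑ i ∈ Finset.Icc 1 9, ee i

/-- The map `μ = s₁₂₆ s₃₄₆ s₅₆₈ s₁₅ s₂₈ s₇₉ s₆₇`. -/
def μE (L : ℕ → ℤ) : ℕ → ℤ :=
  reflE (r3 1 2 6) (reflE (r3 3 4 6) (reflE (r3 5 6 8)
    (reflE (r2 1 5) (reflE (r2 2 8) (reflE (r2 7 9) (reflE (r2 6 7) L))))))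


/-!
Each reflection in a root `e_i - e_j` or `e_0 - e_i - e_j - e_k` has an explicit coordinate formula,
so `μ(L)` is `L` minus a combination of the seven roots whose coefficients are linear in the
coordinates of `L`. Applying that formula a second time, to `μ(L)`, and comparing coefficients gives
`μ² = T_α`. The comparison has to be made in the basis `e_0, …, e_9`: the seven roots are linearly
dependent (`r3 5 6 8 = r3 1 2 6 + r2 1 5 + r2 2 8`), so their coefficients are not determined.
-/

open Finset

lemma ee_apply (i j : ℕ) : ee i j = if j = i then 1 else 0 := rfl

lemma r2_apply (i j k : ℕ) : r2 i j k = ee i k - ee j k := rfl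

lemma r3_apply (i j k l : ℕ) : r3 i j k l = ee 0 l - ee i l - ee j l - ee k l := rfl

lemma B_comm (x y : ℕ → ℤ) : B x y = B y x := by
  simp only [B, mul_comm]

lemma B_sub_left (x y z : ℕ → ℤ) : B (x - y) z = B x z - B y z := by
  simp only [B, Pi.sub_apply, sub_mul, sum_sub_distrib]
  ring

lemma B_ee_zero_left (x : ℕ → ℤ) : B (ee 0) x = -x 0 := by
  simp [B, ee]

lemma B_ee_left {i : ℕ} (hi : i ∈ Icc 1 9) (x : ℕ → ℤ) : B (ee i) x = x i := by
  have hi0 : 0 ≠ i := by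
    rw [mem_Icc] at hi
    omega
  simp [B, ee, hi0, hi]

lemma B_r2_left {i j : ℕ} (hi : i ∈ Icc 1 9) (hj : j ∈ Icc 1 9) (x : ℕ → ℤ) :
    B (r2 i j) x = x i - x j := by
  rw [r2, B_sub_left, B_ee_left hi, B_ee_left hj]

lemma B_r3_left {i j k : ℕ} (hi : i ∈ Icc 1 9) (hj : j ∈ Icc 1 9) (hk : k ∈ Icc 1 9)
    (x : ℕ → ℤ) : B (r3 i j k) x = -x 0 - x i - x j - x k := by
  rw [r3, B_sub_left, B_sub_left, B_sub_left, B_ee_zero_left, B_ee_left hi, B_ee_left hj,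
    B_ee_left hk]

lemma reflE_r2 {i j : ℕ} (hi : i ∈ Icc 1 9) (hj : j ∈ Icc 1 9) (x : ℕ → ℤ) :
    reflE (r2 i j) x = x - (x i - x j) • r2 i j := by
  rw [reflE, B_r2_left hi hj]

lemma reflE_r3 {i j k : ℕ} (hi : i ∈ Icc 1 9) (hj : j ∈ Icc 1 9) (hk : k ∈ Icc 1 9)
    (x : ℕ → ℤ) : reflE (r3 i j k) x = x + (x 0 + x i + x j + x k) • r3 i j k := by
  rw [reflE, B_r3_left hi hj hk]
  module

lemma δδ_eq : δδ = 3 • ee 0 - (ee 1 + ee 2 + ee 3 + ee 4 + ee 5 + ee 6 + ee 7 + ee 8 + ee 9) := by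
  simp only [δδ, sum_Icc_succ_top, Icc_self, sum_singleton, Nat.reduceAdd, Nat.one_le_ofNat]

lemma B_δδ_left (x : ℕ → ℤ) :
    B δδ x = -3 * x 0 - x 1 - x 2 - x 3 - x 4 - x 5 - x 6 - x 7 - x 8 - x 9 := by
  simp only [B, δδ_eq, sum_Icc_succ_top, Icc_self, sum_singleton, Nat.reduceAdd,
    Nat.one_le_ofNat, Pi.sub_apply, Pi.add_apply, Pi.smul_apply, ee_apply,
    Nat.reduceEqDiff, reduceIte]
  ring

lemma μE_eq (L : ℕ → ℤ) :
    μE L = L - (L 6 - L 7) • r2 6 7 - (L 6 - L 9) • r2 7 9 - (L 2 - L 8) • r2 2 8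
      - (L 1 - L 5) • r2 1 5 + (L 0 + L 1 + L 2 + L 7) • r3 5 6 8
      + (L 0 + L 3 + L 4 + L 7) • r3 3 4 6 + (L 0 + L 5 + L 7 + L 8) • r3 1 2 6 := by
  simp (disch := decide) only [μE, reflE_r2, reflE_r3]
  simp only [Pi.sub_apply, Pi.add_apply, Pi.smul_apply, smul_eq_mul, r2_apply, r3_apply,
    ee_apply, Nat.reduceEqDiff, reduceIte]
  module

/-- `μ² = T_α` with `α = e₆ - e₇`:
`μ(μ(L)) = L + ⟨δ,L⟩ (e₆-e₇) - (⟨δ,L⟩ + ⟨L, e₆-e₇⟩) δ` for all `L ∈ P`. -/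
theorem stmt13 :
    ∀ L : ℕ → ℤ,
      μE (μE L) = L + B δδ L • r2 6 7 - (B δδ L + B L (r2 6 7)) • δδ := by
  intro L
  rw [μE_eq (μE L), μE_eq L, B_δδ_left, B_comm L, B_r2_left (by decide) (by decide), δδ_eq]
  simp only [Pi.sub_apply, Pi.add_apply, Pi.smul_apply, smul_eq_mul, r2_apply, r3_apply,
    ee_apply, Nat.reduceEqDiff, reduceIte]
  simp only [r2, r3]
  module
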